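/- arXiv:2306.11537 — 3 statements merged into one kernel-verified Lean document; each statement's English description precedes it below -/
import Mathlib

section
/- Let p ≥ 5 be a prime, n a positive integer, and suppose w_1,…,w_n ∈ Z_p have ν_p(w_j) = 1 for all j, are pairwise distinct, and satisfy max_{1≤j≤n} ν_p( Π_{ℓ≠j} (w_j − w_ℓ) ) = n − 1 + f(n) where f(n) = Σ_{i=1}^∞ ⌊(n−1)/((p−1)p^{i−1})⌋. Then every entry of the inverse of the Vandermonde matrix V (with (i,j)-entry w_i^{j−1}) at position (i,j) has p-adic valuation at least 1 − i − (n−1)·p/(p−1)². -/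
/-!
Column `j` of the inverse Vandermonde matrix holds the coefficients of the Lagrange basis
polynomial `∏_{l ≠ j} (X - w_l) / ∏_{l ≠ j} (w_j - w_l)`. All nodes have norm `p⁻¹`, so by the
ultrametric inequality the coefficient of `X^i` in the numerator, an elementary symmetric
polynomial of degree `n - 1 - i` in the nodes, has norm at most `p^{-(n-1-i)}`. The denominator
has valuation at most `n - 1 + f(n)`, and summing a geometric series gives
`f(n) ≤ (n - 1) p / (p - 1)²`.
-/

open Polynomial Finset

theorem Lagrange.norm_coeff_nodal_le {R ι : Type*} [NormedCommRing R] [NormOneClass R]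
    [IsUltrametricDist R] {s : Finset ι} {v : ι → R} {r : ℝ} (hr : 0 ≤ r)
    (hv : ∀ l ∈ s, ‖v l‖ ≤ r) (k : ℕ) :
    ‖(nodal s v).coeff k‖ ≤ r ^ (#s - k) := by
  rcases le_or_gt k #s with hk | hk
  · have hcard : Multiset.card (s.val.map v) = #s := by simp
    have hnodal : nodal s v = ((s.val.map v).map fun t => X - C t).prod := by
      rw [Multiset.map_map]; rfl
    have hsign (x : R) : ‖(-1) ^ (#s - k) * x‖ = ‖x‖ := by
      rcases neg_one_pow_eq_or R (#s - k) with h | h <;> simp [h]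
    rw [hnodal, Multiset.prod_X_sub_C_coeff _ (hcard ▸ hk), hcard, esymm_map_val, hsign]
    refine IsUltrametricDist.norm_sum_le_of_forall_le_of_nonneg (by positivity) fun t ht => ?_
    obtain ⟨hts, htc⟩ := mem_powersetCard.1 ht
    calc ‖∏ l ∈ t, v l‖ ≤ ∏ l ∈ t, ‖v l‖ := norm_prod_le _ _
      _ ≤ ∏ _l ∈ t, r := prod_le_prod (fun _ _ => norm_nonneg _) fun l hl => hv l (hts hl)
      _ = r ^ (#s - k) := by rw [prod_const, htc]
  · have : Nontrivial R := NormOneClass.nontrivial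
    rw [coeff_eq_zero_of_natDegree_lt (natDegree_nodal (R := R) ▸ hk), norm_zero]
    positivity

theorem Lagrange.basis_eq_C_nodalWeight_mul_nodal_erase {F ι : Type*} [Field F] [DecidableEq ι]
    (s : Finset ι) (v : ι → F) (i : ι) :
    Lagrange.basis s v i = C (nodalWeight s v i) * nodal (s.erase i) v := by
  simp_rw [Lagrange.basis, basisDivisor, nodalWeight, nodal, prod_mul_distrib, map_prod]

namespace Matrix

theorem inv_vandermonde_apply {K : Type*} [Field K] {n : ℕ} {v : Fin n → K}
    (hv : Function.Injective v) (i j : Fin n) :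
    (vandermonde v)⁻¹ i j = (Lagrange.basis univ v j).coeff i := by
  suffices vandermonde v * of (fun i j : Fin n => (Lagrange.basis univ v j).coeff i) = 1 by
    rw [inv_eq_right_inv this, of_apply]
  ext k j
  have hdeg : (Lagrange.basis univ v j).natDegree < n := by
    rw [Lagrange.natDegree_basis hv.injOn (mem_univ j), card_univ, Fintype.card_fin]
    exact Nat.sub_lt j.pos one_pos
  calc (vandermonde v * of fun i j : Fin n => (Lagrange.basis univ v j).coeff i) k j
      = (Lagrange.basis univ v j).eval (v k) := by
        rw [eval_eq_sum_range' hdeg, ← Fin.sum_univ_eq_sum_range, mul_apply]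
        simp only [vandermonde_apply, of_apply, mul_comm]
    _ = (1 : Matrix (Fin n) (Fin n) K) k j := by
        rcases eq_or_ne k j with rfl | hkj
        · rw [Lagrange.eval_basis_self hv.injOn (mem_univ k), one_apply_eq]
        · rw [Lagrange.eval_basis_of_ne hkj.symm (mem_univ k), one_apply_ne hkj]

theorem norm_inv_vandermonde_apply_le {K : Type*} [NormedField K] [IsUltrametricDist K] {n : ℕ}
    {v : Fin n → K} (hv : Function.Injective v) {r : ℝ} (hr : 0 ≤ r) (hvr : ∀ l, ‖v l‖ ≤ r)
    (i j : Fin n) :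
    ‖(vandermonde v)⁻¹ i j‖ ≤ r ^ (n - 1 - i) / ‖∏ l ∈ univ.erase j, (v j - v l)‖ := by
  rw [inv_vandermonde_apply hv, Lagrange.basis_eq_C_nodalWeight_mul_nodal_erase, coeff_C_mul,
    Lagrange.nodalWeight, prod_inv_distrib, norm_mul, norm_inv, ← div_eq_inv_mul]
  gcongr
  simpa using Lagrange.norm_coeff_nodal_le (s := univ.erase j) hr (fun l _ => hvr l) (i : ℕ)

end Matrix

theorem cast_sum_div_pred_mul_pow_le (m : ℕ) {p : ℕ} (hp : 2 ≤ p) (N : ℕ) :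
    ((∑ t ∈ range N, m / ((p - 1) * p ^ t) : ℕ) : ℝ) ≤ m * p / ((p : ℝ) - 1) ^ 2 := by
  have hp1 : (1 : ℝ) < p := by exact_mod_cast hp
  have hgeom : ∑ t ∈ range N, ((p : ℝ)⁻¹) ^ t ≤ (1 - (p : ℝ)⁻¹)⁻¹ :=
    sum_le_hasSum _ (fun _ _ => by positivity)
      (hasSum_geometric_of_lt_one (by positivity) (inv_lt_one_of_one_lt₀ hp1))
  calc ((∑ t ∈ range N, m / ((p - 1) * p ^ t) : ℕ) : ℝ)
      ≤ ∑ t ∈ range N, (m : ℝ) / (((p : ℝ) - 1) * (p : ℝ) ^ t) := by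
        push_cast
        refine sum_le_sum fun t _ => Nat.cast_div_le.trans_eq ?_
        rw [Nat.cast_mul, Nat.cast_pow, Nat.cast_sub (by omega), Nat.cast_one]
    _ = m / ((p : ℝ) - 1) * ∑ t ∈ range N, ((p : ℝ)⁻¹) ^ t := by
        rw [mul_sum]
        refine sum_congr rfl fun t _ => ?_
        rw [inv_pow, div_mul_eq_div_div, div_eq_mul_inv]
    _ ≤ m / ((p : ℝ) - 1) * (1 - (p : ℝ)⁻¹)⁻¹ :=
        mul_le_mul_of_nonneg_left hgeom (div_nonneg (by positivity) (by linarith))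
    _ = m * p / ((p : ℝ) - 1) ^ 2 := by
        field_simp

theorem vandermonde_inverse_entry_valuation (p : ℕ) [Fact p.Prime] (n : ℕ) (hn : 0 < n)
    (w : Fin n → ℤ_[p]) (hdist : Function.Injective w)
    (hval : ∀ j, ‖w j‖ = (p : ℝ)⁻¹)
    (hmax : (Finset.univ.sup' ⟨⟨0, hn⟩, Finset.mem_univ _⟩
        (fun j => ((∏ l ∈ Finset.univ.erase j, (w j - w l)).valuation : ℤ))) =
      (n : ℤ) - 1 + (∑ i ∈ Finset.range n, (n - 1) / ((p - 1) * p ^ i) : ℕ))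
    (i j : Fin n) :
    ‖((Matrix.vandermonde (fun k => ((w k : ℚ_[p]))))⁻¹ i j)‖ ≤
      (p : ℝ) ^ (-(1 - ((i : ℝ) + 1) - ((n : ℝ) - 1) * p / ((p : ℝ) - 1) ^ 2)) := by
  have hp : (1 : ℝ) < p := mod_cast (Fact.out : p.Prime).one_lt
  set f := ∑ i ∈ range n, (n - 1) / ((p - 1) * p ^ i)
  set D : ℤ_[p] := ∏ l ∈ univ.erase j, (w j - w l)
  have hD : D ≠ 0 := prod_ne_zero_iff.2 fun l hl =>
    sub_ne_zero.2 fun h => (mem_erase.1 hl).1 (hdist h.symm)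
  have hDcoe : (D : ℚ_[p]) = ∏ l ∈ univ.erase j, ((w j : ℚ_[p]) - w l) :=
    (map_prod PadicInt.Coe.ringHom _ _).trans
      (prod_congr rfl fun l _ => map_sub PadicInt.Coe.ringHom _ _)
  have hvalD : (D.valuation : ℝ) ≤ n - 1 + f := by
    have : (D.valuation : ℤ) ≤ n - 1 + f := by
      rw [← hmax]
      exact le_sup' (fun j => ((∏ l ∈ univ.erase j, (w j - w l)).valuation : ℤ)) (mem_univ j)
    exact_mod_cast this
  have hf : (f : ℝ) ≤ ((n : ℝ) - 1) * p / ((p : ℝ) - 1) ^ 2 := by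
    have := cast_sum_div_pred_mul_pow_le (n - 1) (Fact.out : p.Prime).two_le n
    rwa [Nat.cast_sub hn, Nat.cast_one] at this
  have hcast : ((n - 1 - i : ℕ) : ℝ) = n - 1 - i := by
    rw [Nat.cast_sub (by omega), Nat.cast_sub hn, Nat.cast_one]
  calc _ ≤ (p : ℝ)⁻¹ ^ (n - 1 - i) / ‖(D : ℚ_[p])‖ :=
        hDcoe ▸ Matrix.norm_inv_vandermonde_apply_le (fun a b h => hdist (Subtype.coe_injective h))
          (by positivity) (fun l => (PadicInt.norm_def (z := w l) ▸ hval l).le) i j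
    _ = (p : ℝ) ^ ((i : ℝ) - (n - 1) + D.valuation) := by
        rw [← PadicInt.norm_def, PadicInt.norm_eq_zpow_neg_valuation hD, ← Real.rpow_intCast,
          inv_pow, ← Real.rpow_natCast, ← Real.rpow_neg (by positivity),
          ← Real.rpow_sub (by positivity), hcast]
        push_cast
        ring_nf
    _ ≤ _ := Real.rpow_le_rpow_of_exponent_le hp.le (by linarith)
end

section
/- Let p be a prime, n ≥ 1 an integer, and w_1, …, w_n distinct elements of p·Z_p. If α ∈ (Z/p^n Z)^n lies in the kernel of the transpose action of the Vandermonde matrix V̄ ∈ M_n(Z/p^n Z) with entries w_i^{j−1} mod p^n, and α̃ ∈ Z_p^n is any lift of α with ν_p(α̃_i) = ν_p(α_i), then ν_p(α_i) ≥ n + min_{1≤j≤n} ν_p((V^{−1})_{i,j}), where V ∈ M_n(Q_p) is the Vandermonde matrix over Q_p. -/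
set_option maxHeartbeats 1000000

theorem kernel_lift_valuation_bound (p : ℕ) [Fact p.Prime] (n : ℕ) (hn : 1 ≤ n)
    (w : Fin n → ℤ_[p]) (hdist : Function.Injective w)
    (hmem : ∀ j, ‖w j‖ ≤ (p : ℝ)⁻¹)
    (α : Fin n → ZMod (p ^ n))
    (hker : ∀ i, ∑ j : Fin n, (PadicInt.toZModPow n (w i ^ (j : ℕ))) * α j = 0)
    (αlift : Fin n → ℤ_[p])
    (hlift : ∀ i, PadicInt.toZModPow n (αlift i) = α i)
    (i : Fin n) :
    ‖αlift i‖ ≤ (p : ℝ) ^ (-(n : ℤ)) *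
      Finset.univ.sup' ⟨⟨0, hn⟩, Finset.mem_univ _⟩
        (fun j => ‖((Matrix.vandermonde (fun k => ((w k : ℚ_[p]))))⁻¹ i j)‖) := by
  classical
  set V := Matrix.vandermonde (fun k => ((w k : ℚ_[p]))) with hV
  have hinj : Function.Injective (fun k => ((w k : ℚ_[p]))) := fun a b h => by
    exact hdist (Subtype.coe_injective h)
  have hdet : V.det ≠ 0 := Matrix.det_vandermonde_ne_zero_iff.mpr hinj
  have hVinv : V⁻¹ * V = 1 := Matrix.nonsing_inv_mul V (isUnit_iff_ne_zero.mpr hdet)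
  set t : Fin n → ℤ_[p] := fun j => ∑ k : Fin n, w j ^ (k : ℕ) * αlift k with ht
  have htnorm : ∀ j, ‖t j‖ ≤ (p : ℝ) ^ (-(n : ℤ)) := by
    intro j
    rw [show (-(n : ℤ)) = (-n : ℤ) by ring, PadicInt.norm_le_pow_iff_mem_span_pow,
      ← PadicInt.ker_toZModPow, RingHom.mem_ker]
    have : (PadicInt.toZModPow n) (t j) =
        ∑ k : Fin n, (PadicInt.toZModPow n) (w j ^ (k : ℕ)) * α k := by
      rw [ht, map_sum]
      refine Finset.sum_congr rfl fun k _ => ?_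
      rw [map_mul, hlift k]
    rw [this, hker j]
  have key : (αlift i : ℚ_[p]) = ∑ j, V⁻¹ i j * (t j : ℚ_[p]) := by
    have hmv : V.mulVec (fun k => (αlift k : ℚ_[p])) = fun j => (t j : ℚ_[p]) := by
      funext j
      simp only [Matrix.mulVec, dotProduct, hV, Matrix.vandermonde, ht,
        Matrix.of_apply]
      rw [show ((∑ k : Fin n, w j ^ (k : ℕ) * αlift k : ℤ_[p]) : ℚ_[p])
          = PadicInt.Coe.ringHom (∑ k : Fin n, w j ^ (k : ℕ) * αlift k) from rfl,
        map_sum]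
      simp only [map_mul, map_pow]
      rfl
    have h2 : (V⁻¹).mulVec (V.mulVec (fun k => (αlift k : ℚ_[p]))) =
        (fun k => (αlift k : ℚ_[p])) := by
      rw [Matrix.mulVec_mulVec, hVinv, Matrix.one_mulVec]
    have := congrFun h2 i
    rw [hmv] at this
    rw [← this]
    simp [Matrix.mulVec, dotProduct]
  have hsupnn : 0 ≤ Finset.univ.sup' ⟨⟨0, hn⟩, Finset.mem_univ _⟩
      (fun j => ‖(V⁻¹ i j)‖) := by
    exact Finset.le_sup'_iff _ |>.mpr ⟨⟨0, hn⟩, Finset.mem_univ _, norm_nonneg _⟩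
  rw [show ‖αlift i‖ = ‖(αlift i : ℚ_[p])‖ from rfl, key]
  refine IsUltrametricDist.norm_sum_le_of_forall_le_of_nonneg ?_ ?_
  · positivity
  · intro j _
    rw [norm_mul]
    calc ‖V⁻¹ i j‖ * ‖(t j : ℚ_[p])‖
        ≤ (Finset.univ.sup' ⟨⟨0, hn⟩, Finset.mem_univ _⟩ (fun j => ‖(V⁻¹ i j)‖)) *
          ((p : ℝ) ^ (-(n : ℤ))) := by
          apply mul_le_mul (Finset.le_sup' (fun j => ‖V⁻¹ i j‖) (Finset.mem_univ j)) (htnorm j)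
            (norm_nonneg _) hsupnn
      _ = _ := mul_comm _ _
end

section
/- Let p be a prime and S = {s_1, …, s_n} the set of the first n natural numbers coprime to p. Then max_{x∈S} ν_p( Π_{s∈S, s≠x} (x − s) ) = f(n), where f(n) = Σ_{i=1}^∞ ⌊(n−1)/((p−1)p^{i−1})⌋. -/
/-!
Let `c k = k + 1 + ⌊k / (p - 1)⌋` be the `k`-th positive integer prime to `p` and
`qᵢ = (p - 1) p ^ i`. Then `c (k + qᵢ) = c k + p ^ (i + 1)` and `c` maps `[0, qᵢ)` into
`[1, p ^ (i + 1))`, so `p ^ (i + 1) ∣ c k - c j` iff `qᵢ ∣ k - j`. Counting, for each `i`, the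
`j ≠ k` in `[0, n)` with this property gives
`ν_p (∏_{j ≠ k} (c k - c j)) = ∑ᵢ (⌊k / qᵢ⌋ + ⌊(n - 1 - k) / qᵢ⌋)`,
which is at most `∑ᵢ ⌊(n - 1) / qᵢ⌋`, with equality for `k = 0`.
-/

open Finset

theorem Nat.card_filter_modEq_range_erase {q n k : ℕ} (hk : k < n) :
    #{j ∈ (range n).erase k | j ≡ k [MOD q]} = k / q + (n - 1 - k) / q := by
  have hsplit : (range n).erase k = range k ∪ Ico (k + 1) n := by
    ext j; simp only [mem_erase, mem_range, mem_union, mem_Ico]; omega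
  have hdisj : Disjoint (range k) (Ico (k + 1) n) := by
    rw [disjoint_left]; intro j; simp only [mem_range, mem_Ico]; omega
  have hbelow : ∀ t ∈ range k, (k - 1 - t ≡ k [MOD q] ↔ q ∣ t + 1) := fun t ht => by
    rw [Nat.modEq_iff_dvd' (by omega), show k - (k - 1 - t) = t + 1 by simp at ht; omega]
  have habove : ∀ t ∈ range (n - (k + 1)), (k + 1 + t ≡ k [MOD q] ↔ q ∣ t + 1) := fun t _ => by
    rw [Nat.ModEq.comm, Nat.modEq_iff_dvd' (by omega), show k + 1 + t - k = t + 1 by omega]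
  rw [hsplit, filter_union, card_union_of_disjoint (disjoint_filter_filter hdisj),
    ← Nat.card_multiples, ← Nat.card_multiples, card_filter, card_filter, card_filter, card_filter,
    sum_Ico_eq_sum_range, ← sum_range_reflect, show n - 1 - k = n - (k + 1) by omega]
  congr 1
  · exact sum_congr rfl fun t ht => if_congr (hbelow t ht) rfl rfl
  · exact sum_congr rfl fun t ht => if_congr (habove t ht) rfl rfl

theorem padicValInt_prod {p : ℕ} [Fact p.Prime] {ι : Type*} {s : Finset ι} {f : ι → ℤ}
    (hf : ∀ i ∈ s, f i ≠ 0) : padicValInt p (∏ i ∈ s, f i) = ∑ i ∈ s, padicValInt p (f i) := by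
  induction s using Finset.cons_induction with
  | empty => simp
  | cons a s ha ih =>
    rw [forall_mem_cons] at hf
    rw [prod_cons, sum_cons, padicValInt.mul hf.1 (prod_ne_zero_iff.mpr hf.2), ih hf.2]

theorem padicValInt_eq_card_filter_pow_dvd {p : ℕ} [Fact p.Prime] {a : ℤ} {N : ℕ}
    (h : ¬ (p : ℤ) ^ (N + 1) ∣ a) : padicValInt p a = #{i ∈ range N | (p : ℤ) ^ (i + 1) ∣ a} := by
  have ha : a ≠ 0 := by rintro rfl; exact h (dvd_zero _)
  rw [padicValInt_dvd_iff, not_or, not_le] at h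
  simp_rw [padicValInt_dvd_iff, or_iff_right ha]
  rw [show ({i ∈ range N | i + 1 ≤ padicValInt p a} : Finset ℕ) = range (padicValInt p a) by
    ext i; simp only [mem_filter, mem_range]; omega, card_range]

theorem StrictMono.image_range_card_eq {α : Type*} [LinearOrder α] {f : ℕ → α}
    (hf : StrictMono f) {S : Finset α} (hS : ∀ s ∈ S, ∃ k, f k = s)
    (hfirst : ∀ k, f k ∉ S → ∀ s ∈ S, s < f k) :
    (range #S).image f = S := by
  have hsub : (range #S).image f ⊆ S := by
    intro x hx
    obtain ⟨k, hk, rfl⟩ := mem_image.mp hx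
    by_contra hkS
    have hS_sub : S ⊆ (range k).image f := by
      intro s hs
      obtain ⟨j, rfl⟩ := hS s hs
      exact mem_image_of_mem f (mem_range.mpr (hf.lt_iff_lt.mp (hfirst k hkS _ hs)))
    have := (card_le_card hS_sub).trans card_image_le
    rw [card_range] at this
    exact absurd (mem_range.mp hk) (by omega)
  exact eq_of_subset_of_card_le hsub (by rw [card_image_of_injective _ hf.injective, card_range])

/-- The `k`-th positive integer not divisible by `p`, counting from `k = 0`: the non-multiples
come in blocks of `p - 1` between consecutive multiples of `p`. -/
def nthNonMultiple (p k : ℕ) : ℕ := p * (k / (p - 1)) + k % (p - 1) + 1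

namespace nthNonMultiple

theorem eq_add_div (p k : ℕ) : nthNonMultiple p k = k + 1 + k / (p - 1) := by
  rcases p with _ | m
  · simp [nthNonMultiple]
  · simp only [nthNonMultiple, Nat.add_sub_cancel]
    linarith [Nat.div_add_mod k m]

theorem pos (p k : ℕ) : 0 < nthNonMultiple p k := Nat.succ_pos _

theorem strictMono (p : ℕ) : StrictMono (nthNonMultiple p) := by
  intro j k h
  simp only [eq_add_div]
  have := Nat.div_le_div_right (c := p - 1) h.le
  omega

theorem not_dvd {p : ℕ} (hp : 1 < p) (k : ℕ) : ¬ p ∣ nthNonMultiple p k := by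
  rw [nthNonMultiple, add_assoc, Nat.dvd_add_right (dvd_mul_right _ _)]
  have := Nat.mod_lt k (show 0 < p - 1 by omega)
  exact Nat.not_dvd_of_pos_of_lt (by omega) (by omega)

theorem exists_eq {p m : ℕ} (hp : 1 < p) (hm : ¬ p ∣ m) : ∃ k, nthNonMultiple p k = m := by
  have hr : 0 < m % p := Nat.pos_of_ne_zero fun h => hm (Nat.dvd_of_mod_eq_zero h)
  have hr' : m % p - 1 < p - 1 := by have := Nat.mod_lt m (show 0 < p by omega); omega
  refine ⟨(p - 1) * (m / p) + (m % p - 1), ?_⟩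
  rw [nthNonMultiple, Nat.mul_add_div (by omega), Nat.mul_add_mod, Nat.div_eq_of_lt hr',
    Nat.mod_eq_of_lt hr']
  simp only [Nat.add_zero]
  have := Nat.div_add_mod m p
  omega

theorem add_sub_one_mul {p : ℕ} (hp : 1 < p) (k m : ℕ) :
    nthNonMultiple p (k + (p - 1) * m) = nthNonMultiple p k + p * m := by
  rw [nthNonMultiple, nthNonMultiple, Nat.add_mul_div_left _ _ (by omega),
    Nat.add_mul_mod_self_left]
  ring

theorem lt_pow {p i k : ℕ} (hp : 1 < p) (hk : k < (p - 1) * p ^ i) :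
    nthNonMultiple p k < p ^ (i + 1) := by
  have hdiv : k / (p - 1) + 1 ≤ p ^ i := (Nat.div_lt_iff_lt_mul (by omega)).mpr (by rwa [mul_comm])
  have hmod := Nat.mod_lt k (show 0 < p - 1 by omega)
  calc nthNonMultiple p k < p * (k / (p - 1)) + p := by rw [nthNonMultiple]; omega
    _ = p * (k / (p - 1) + 1) := by ring
    _ ≤ p ^ (i + 1) := by rw [pow_succ']; exact Nat.mul_le_mul_left p hdiv

theorem mod_pow {p : ℕ} (hp : 1 < p) (i k : ℕ) :
    nthNonMultiple p k % p ^ (i + 1) = nthNonMultiple p (k % ((p - 1) * p ^ i)) := by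
  have hq : 0 < (p - 1) * p ^ i := Nat.mul_pos (by omega) (by positivity)
  conv_lhs => rw [← Nat.mod_add_div k ((p - 1) * p ^ i), mul_assoc, add_sub_one_mul hp, ← mul_assoc,
    ← pow_succ', Nat.add_mul_mod_self_left]
  exact Nat.mod_eq_of_lt (lt_pow hp (Nat.mod_lt _ hq))

theorem modEq_pow_iff {p : ℕ} (hp : 1 < p) (i j k : ℕ) :
    nthNonMultiple p j ≡ nthNonMultiple p k [MOD p ^ (i + 1)] ↔ j ≡ k [MOD (p - 1) * p ^ i] := by
  simp only [Nat.ModEq, mod_pow hp, (strictMono p).injective.eq_iff]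

theorem pow_dvd_sub_iff {p : ℕ} (hp : 1 < p) (i j k : ℕ) :
    (p : ℤ) ^ (i + 1) ∣ (nthNonMultiple p k : ℤ) - nthNonMultiple p j ↔
      j ≡ k [MOD (p - 1) * p ^ i] := by
  rw [← modEq_pow_iff hp, Nat.modEq_iff_dvd, Nat.cast_pow]

end nthNonMultiple

theorem padicValInt_prod_nthNonMultiple_sub {p n k : ℕ} (hp : p.Prime) (hk : k < n) :
    padicValInt p (∏ j ∈ (range n).erase k, ((nthNonMultiple p k : ℤ) - nthNonMultiple p j)) =
      ∑ i ∈ range n, (k / ((p - 1) * p ^ i) + (n - 1 - k) / ((p - 1) * p ^ i)) := by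
  have := Fact.mk hp
  have hp1 := hp.one_lt
  have hnot_dvd : ∀ j ∈ (range n).erase k,
      ¬ (p : ℤ) ^ (n + 1) ∣ (nthNonMultiple p k : ℤ) - nthNonMultiple p j := by
    intro j hj hdvd
    obtain ⟨hjk, hjn⟩ := mem_erase.mp hj
    have hn : n ≤ (p - 1) * p ^ n :=
      (Nat.lt_pow_self hp1).le.trans (Nat.le_mul_of_pos_left _ (by omega))
    exact hjk (((nthNonMultiple.pow_dvd_sub_iff hp1 n j k).mp hdvd).eq_of_lt_of_lt
      (by simp at hjn; omega) (by omega))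
  have hne : ∀ j ∈ (range n).erase k, (nthNonMultiple p k : ℤ) - nthNonMultiple p j ≠ 0 :=
    fun j hj h => hnot_dvd j hj (h ▸ dvd_zero _)
  rw [padicValInt_prod hne]
  simp_rw [← Nat.card_filter_modEq_range_erase hk]
  rw [sum_congr rfl fun j hj => padicValInt_eq_card_filter_pow_dvd (hnot_dvd j hj)]
  simp_rw [nthNonMultiple.pow_dvd_sub_iff hp1]
  exact sum_card_bipartiteAbove_eq_sum_card_bipartiteBelow _

theorem max_valuation_first_coprimes_general (p : ℕ) (hp : p.Prime) (n : ℕ) (hn : 0 < n)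
    (S : Finset ℕ) (hcard : S.card = n)
    (hcop : ∀ s ∈ S, ¬ p ∣ s)
    (hfirst : ∀ m : ℕ, 0 < m → ¬ p ∣ m → m ∉ S → ∀ s ∈ S, s < m) :
    S.sup' (Finset.card_pos.mp (hcard ▸ hn))
        (fun x => padicValInt p (∏ s ∈ S.erase x, ((x : ℤ) - (s : ℤ)))) =
      ∑ i ∈ Finset.range n, (n - 1) / ((p - 1) * p ^ i) := by
  have hp1 := hp.one_lt
  have hmono := nthNonMultiple.strictMono p
  have hS : (range n).image (nthNonMultiple p) = S := hcard ▸ hmono.image_range_card_eq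
    (fun s hs => nthNonMultiple.exists_eq hp1 (hcop s hs))
    (fun k hk => hfirst _ (nthNonMultiple.pos p k) (nthNonMultiple.not_dvd hp1 k) hk)
  have hval : ∀ k < n, padicValInt p (∏ s ∈ S.erase (nthNonMultiple p k),
      ((nthNonMultiple p k : ℤ) - s)) =
        ∑ i ∈ range n, (k / ((p - 1) * p ^ i) + (n - 1 - k) / ((p - 1) * p ^ i)) := by
    intro k hk
    rw [← hS, ← image_erase hmono.injective, prod_image hmono.injective.injOn]
    exact padicValInt_prod_nthNonMultiple_sub hp hk
  apply le_antisymm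
  · refine sup'_le _ _ fun x hx => ?_
    obtain ⟨k, hk, rfl⟩ := mem_image.mp (hS ▸ hx)
    rw [hval k (mem_range.mp hk)]
    refine sum_le_sum fun i _ => Nat.div_add_div_le_add_div.trans ?_
    rw [Nat.add_sub_cancel' (by simp at hk; omega)]
  · have h0 : nthNonMultiple p 0 ∈ S := hS ▸ mem_image_of_mem _ (mem_range.mpr hn)
    refine le_of_eq_of_le ?_ (le_sup' _ h0)
    simp [hval 0 hn]

theorem max_valuation_first_coprimes (p : ℕ) (hp : p.Prime) (n : ℕ) (hn : 0 < n)
    (S : Finset ℕ) (hcard : S.card = n)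
    (hpos : ∀ s ∈ S, 0 < s) (hcop : ∀ s ∈ S, ¬ p ∣ s)
    (hfirst : ∀ m : ℕ, 0 < m → ¬ p ∣ m → m ∉ S → ∀ s ∈ S, s < m) :
    S.sup' (Finset.card_pos.mp (hcard ▸ hn))
        (fun x => padicValInt p (∏ s ∈ S.erase x, ((x : ℤ) - (s : ℤ)))) =
      ∑ i ∈ Finset.range n, (n - 1) / ((p - 1) * p ^ i) :=
  max_valuation_first_coprimes_general p hp n hn S hcard hcop hfirst
end
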